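/- For every γ ∈ (0,1) one has m_γ = inf over y ∈ M of G_γ(y). -/

import Mathlib

open MeasureTheory Set Real

noncomputable section

/-- Pairs `(y, y')` representing a function of Sobolev class `W¹₂[0,1]`:
`y` is absolutely continuous on `[0,1]` (being an integral of `y'`)
with derivative `y'` belonging to `L²[0,1]`. -/
def W12 : Set ((ℝ → ℝ) × (ℝ → ℝ)) :=
  {p | (∀ x ∈ Icc (0:ℝ) 1, p.1 x = p.1 0 + ∫ t in (0:ℝ)..x, p.2 t) ∧
    IntervalIntegrable p.2 volume 0 1 ∧
    IntervalIntegrable (fun t => (p.2 t) ^ 2) volume 0 1}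

/-- The Rayleigh quotient `(∫₀¹ ((y')² + q y²) dx) / (∫₀¹ y² dx)`. -/
def Rayleigh (q : ℝ → ℝ) (p : (ℝ → ℝ) × (ℝ → ℝ)) : ℝ :=
  (∫ t in (0:ℝ)..1, ((p.2 t) ^ 2 + q t * (p.1 t) ^ 2)) /
    ∫ t in (0:ℝ)..1, (p.1 t) ^ 2

/-- The smallest eigenvalue `λ₁(q)` of the Neumann problem `-y'' + q y = λ y`,
`y'(0) = y'(1) = 0`, defined as the infimum of Rayleigh quotients over
nonzero `y ∈ W¹₂[0,1]`. -/
def lambda1 (q : ℝ → ℝ) : ℝ :=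
  sInf {r | ∃ p ∈ W12, 0 < (∫ t in (0:ℝ)..1, (p.1 t) ^ 2) ∧ r = Rayleigh q p}

/-- The class `A_γ` of potentials: `q ∈ L¹[0,1]`, `q ≥ 0` a.e. on `[0,1]`,
`∫₀¹ q^γ dx = 1`. -/
def Agamma (γ : ℝ) : Set (ℝ → ℝ) :=
  {q | IntervalIntegrable q volume 0 1 ∧
    (∀ᵐ t ∂(volume.restrict (Icc (0:ℝ) 1)), 0 ≤ q t) ∧
    (∫ t in (0:ℝ)..1, q t ^ γ) = 1}

/-- `m_γ := inf_{q ∈ A_γ} λ₁(q)`. -/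
def mGamma (γ : ℝ) : ℝ := sInf (lambda1 '' Agamma γ)

/-- The set `M` of uniformly positive functions of class `W¹₂[0,1]`. -/
def Mset : Set ((ℝ → ℝ) × (ℝ → ℝ)) :=
  {p ∈ W12 | ∃ ζ > (0:ℝ), ∀ x ∈ Icc (0:ℝ) 1, ζ ≤ p.1 x}

/-- `J_γ(y) := ∫₀¹ (y')² dx + (∫₀¹ y^{2γ/(γ−1)} dx)^{(γ−1)/γ}`. -/
def Jg (γ : ℝ) (p : (ℝ → ℝ) × (ℝ → ℝ)) : ℝ :=
  (∫ t in (0:ℝ)..1, (p.2 t) ^ 2) +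
    (∫ t in (0:ℝ)..1, (p.1 t) ^ (2 * γ / (γ - 1))) ^ ((γ - 1) / γ)

/-- `G_γ(y) := J_γ(y) / ∫₀¹ y² dx`. -/
def Gg (γ : ℝ) (p : (ℝ → ℝ) × (ℝ → ℝ)) : ℝ :=
  Jg γ p / ∫ t in (0:ℝ)..1, (p.1 t) ^ 2

/-!
For `y ∈ M` the reverse Hölder inequality `∫ q y² ≥ (∫ y^{2γ/(γ-1)})^{(γ-1)/γ}`, valid for every
`q ∈ A_γ`, is an equality at `q = c y^{2/(γ-1)}`; hence `m_γ ≤ λ₁(q) ≤ G_γ(y)`. Conversely, given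
`q ∈ A_γ` and an admissible `y`, smooth `y` by a Steklov average `Y` (so that the lift is `C¹`)
and lift it to `z = √(Y² + η/2) ∈ M`: the energy of `z` is at most that of `y`, and `y² ≤ z² ≤ y² + η` on `[0,1]`,
so reverse Hölder gives `G_γ(z) ≤ R(q, y) + η ∫ q / ∫ y²`.
-/

lemma continuousOn_of_mem_W12 {p : (ℝ → ℝ) × (ℝ → ℝ)} (hp : p ∈ W12) :
    ContinuousOn p.1 (Icc 0 1) := by
  have hprim := intervalIntegral.continuousOn_primitive_interval (a := 0) (b := 1) (μ := volume)
    (f := p.2) (by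
      rw [uIcc_of_le zero_le_one, integrableOn_Icc_iff_integrableOn_Ioc]
      exact hp.2.1.1)
  rw [uIcc_of_le zero_le_one] at hprim
  exact (continuousOn_const.add hprim).congr hp.1

lemma mem_W12_of_hasDerivAt {f f' : ℝ → ℝ} (hf : ∀ x, HasDerivAt f (f' x) x)
    (hf' : Continuous f') : (f, f') ∈ W12 :=
  ⟨fun x _ => by
    rw [intervalIntegral.integral_eq_sub_of_hasDerivAt (fun t _ => hf t)
      (hf'.intervalIntegrable 0 x)]
    ring,
   hf'.intervalIntegrable 0 1, (hf'.pow 2).intervalIntegrable 0 1⟩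

lemma const_one_mem_Mset : ((fun _ => (1:ℝ)), (fun _ => (0:ℝ))) ∈ Mset :=
  ⟨mem_W12_of_hasDerivAt (fun _ => hasDerivAt_const _ _) continuous_const,
    1, one_pos, fun _ _ => le_rfl⟩

lemma rayleigh_nonneg {q : ℝ → ℝ} (hq : ∀ᵐ t ∂(volume.restrict (Icc (0:ℝ) 1)), 0 ≤ q t)
    (p : (ℝ → ℝ) × (ℝ → ℝ)) : 0 ≤ Rayleigh q p := by
  refine div_nonneg ?_ (intervalIntegral.integral_nonneg zero_le_one fun _ _ => sq_nonneg _)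
  refine intervalIntegral.integral_nonneg_of_ae_restrict zero_le_one ?_
  filter_upwards [hq] with t ht
  positivity

lemma rayleigh_set_nonempty (q : ℝ → ℝ) :
    {r | ∃ p ∈ W12, 0 < (∫ t in (0:ℝ)..1, (p.1 t) ^ 2) ∧ r = Rayleigh q p}.Nonempty :=
  ⟨_, _, const_one_mem_Mset.1, by simp, rfl⟩

lemma rayleigh_set_bddBelow {q : ℝ → ℝ}
    (hq : ∀ᵐ t ∂(volume.restrict (Icc (0:ℝ) 1)), 0 ≤ q t) :
    0 ∈ lowerBounds {r | ∃ p ∈ W12, 0 < (∫ t in (0:ℝ)..1, (p.1 t) ^ 2) ∧ r = Rayleigh q p} := by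
  rintro r ⟨p, -, -, rfl⟩
  exact rayleigh_nonneg hq p

lemma lambda1_le_rayleigh {q : ℝ → ℝ} (hq : ∀ᵐ t ∂(volume.restrict (Icc (0:ℝ) 1)), 0 ≤ q t)
    {p : (ℝ → ℝ) × (ℝ → ℝ)} (hp : p ∈ W12) (hD : 0 < ∫ t in (0:ℝ)..1, (p.1 t) ^ 2) :
    lambda1 q ≤ Rayleigh q p :=
  csInf_le ⟨0, rayleigh_set_bddBelow hq⟩ ⟨p, hp, hD, rfl⟩

lemma lambda1_nonneg {q : ℝ → ℝ} (hq : ∀ᵐ t ∂(volume.restrict (Icc (0:ℝ) 1)), 0 ≤ q t) :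
    0 ≤ lambda1 q :=
  le_csInf (rayleigh_set_nonempty q) (rayleigh_set_bddBelow hq)

lemma mGamma_le_lambda1 {γ : ℝ} {q : ℝ → ℝ} (hq : q ∈ Agamma γ) : mGamma γ ≤ lambda1 q :=
  csInf_le ⟨0, by rintro _ ⟨q', hq', rfl⟩; exact lambda1_nonneg hq'.2.1⟩ ⟨q, hq, rfl⟩

lemma Gg_nonneg (γ : ℝ) {p : (ℝ → ℝ) × (ℝ → ℝ)} (hp : p ∈ Mset) : 0 ≤ Gg γ p := by
  obtain ⟨-, ζ, hζ, hζp⟩ := hp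
  have hI : 0 ≤ ∫ t in (0:ℝ)..1, p.1 t ^ (2 * γ / (γ - 1)) :=
    intervalIntegral.integral_nonneg zero_le_one fun t ht => rpow_nonneg (hζ.le.trans (hζp t ht)) _
  exact div_nonneg (add_nonneg (intervalIntegral.integral_nonneg zero_le_one fun _ _ => sq_nonneg _)
    (rpow_nonneg hI _)) (intervalIntegral.integral_nonneg zero_le_one fun _ _ => sq_nonneg _)

lemma intervalIntegral_pos_of_continuousOn {f : ℝ → ℝ} (hf : ContinuousOn f (Icc 0 1))
    (hpos : ∀ x ∈ Icc (0:ℝ) 1, 0 < f x) : 0 < ∫ t in (0:ℝ)..1, f t :=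
  intervalIntegral.intervalIntegral_pos_of_pos_on (hf.intervalIntegrable_of_Icc zero_le_one)
    (fun x hx => hpos x (Ioo_subset_Icc_self hx)) one_pos

lemma memLp_ofReal_of_integrable_rpow {α : Type*} [MeasurableSpace α] {μ : Measure α}
    {f : α → ℝ} {r : ℝ} (hr : 0 < r) (hf : AEStronglyMeasurable f μ) (hf0 : 0 ≤ᵐ[μ] f)
    (hfr : Integrable (fun x => f x ^ r) μ) : MemLp f (ENNReal.ofReal r) μ := by
  refine (integrable_norm_rpow_iff hf (by simpa using hr) ENNReal.ofReal_ne_top).1 ?_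
  rw [ENNReal.toReal_ofReal hr.le]
  refine hfr.congr ?_
  filter_upwards [hf0] with x hx
  rw [Real.norm_of_nonneg hx]

lemma integral_rpow_le_mul_rpow {α : Type*} [MeasurableSpace α] {μ : Measure α} {γ : ℝ}
    (hγ : γ ∈ Ioo (0:ℝ) 1) {q z : α → ℝ} (hq : 0 ≤ᵐ[μ] q) (hz : ∀ᵐ x ∂μ, 0 < z x)
    (hqz : Integrable (fun x => q x * z x ^ 2) μ)
    (hz' : Integrable (fun x => z x ^ (2 * γ / (γ - 1))) μ) :
    ∫ x, q x ^ γ ∂μ ≤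
      (∫ x, q x * z x ^ 2 ∂μ) ^ γ * (∫ x, z x ^ (2 * γ / (γ - 1)) ∂μ) ^ (1 - γ) := by
  obtain ⟨hγ0, hγ1⟩ := hγ
  have hexp : 2 * γ / (γ - 1) * (1 - γ) = -(2 * γ) := by
    rw [div_mul_eq_mul_div, div_eq_iff (by linarith)]
    ring
  have hpq : (1 / γ).HolderConjugate (1 / (1 - γ)) := by
    rw [Real.holderConjugate_iff, one_div, one_div, inv_inv, inv_inv]
    exact ⟨(one_lt_inv₀ hγ0).2 hγ1, by ring⟩
  -- `q ^ γ = (q z²) ^ γ * (z ^ (2γ/(γ-1))) ^ (1-γ)`, then Hölder with exponents `1/γ`, `1/(1-γ)`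
  set F := fun x => (q x * z x ^ 2) ^ γ
  set G := fun x => (z x ^ (2 * γ / (γ - 1))) ^ (1 - γ)
  have hF0 : 0 ≤ᵐ[μ] F := by
    filter_upwards [hq] with x hx
    exact rpow_nonneg (mul_nonneg hx (sq_nonneg _)) _
  have hG0 : 0 ≤ᵐ[μ] G := by
    filter_upwards [hz] with x hx
    positivity
  have hFpow : ∀ᵐ x ∂μ, F x ^ (1 / γ) = q x * z x ^ 2 := by
    filter_upwards [hq] with x hx
    rw [← rpow_mul (mul_nonneg hx (sq_nonneg _)), mul_one_div_cancel hγ0.ne', rpow_one]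
  have hGpow : ∀ᵐ x ∂μ, G x ^ (1 / (1 - γ)) = z x ^ (2 * γ / (γ - 1)) := by
    filter_upwards [hz] with x hx
    rw [← rpow_mul (by positivity), mul_one_div_cancel (by linarith), rpow_one]
  have hFG : ∀ᵐ x ∂μ, F x * G x = q x ^ γ := by
    filter_upwards [hq, hz] with x hqx hzx
    simp only [F, G]
    rw [← rpow_mul hzx.le, hexp, mul_rpow hqx (by positivity), ← rpow_natCast,
      ← rpow_mul hzx.le, mul_assoc, ← rpow_add hzx]
    norm_num
  have hFLp : MemLp F (ENNReal.ofReal (1 / γ)) μ :=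
    memLp_ofReal_of_integrable_rpow (by positivity)
      (hqz.1.aemeasurable.pow_const γ).aestronglyMeasurable hF0
      (hqz.congr (hFpow.mono fun x hx => hx.symm))
  have hGLp : MemLp G (ENNReal.ofReal (1 / (1 - γ))) μ :=
    memLp_ofReal_of_integrable_rpow (by simpa using hγ1)
      (hz'.1.aemeasurable.pow_const _).aestronglyMeasurable hG0
      (hz'.congr (hGpow.mono fun x hx => hx.symm))
  have hold := integral_mul_le_Lp_mul_Lq_of_nonneg hpq hF0 hG0 hFLp hGLp
  rwa [integral_congr_ae hFG, integral_congr_ae hFpow, integral_congr_ae hGpow, one_div_one_div,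
    one_div_one_div] at hold

lemma rpow_le_of_one_le_rpow_mul_rpow {γ A B : ℝ} (hγ : 0 < γ) (hA : 0 ≤ A) (hB : 0 < B)
    (h : 1 ≤ A ^ γ * B ^ (1 - γ)) : B ^ ((γ - 1) / γ) ≤ A := by
  have h' : B ^ (γ - 1) ≤ A ^ γ := by
    calc B ^ (γ - 1) ≤ A ^ γ * B ^ (1 - γ) * B ^ (γ - 1) :=
          le_mul_of_one_le_left (rpow_nonneg hB.le _) h
      _ = A ^ γ := by rw [mul_assoc, ← rpow_add hB]; norm_num
  calc B ^ ((γ - 1) / γ) = (B ^ (γ - 1)) ^ (1 / γ) := by rw [← rpow_mul hB.le]; ring_nf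
    _ ≤ (A ^ γ) ^ (1 / γ) := by gcongr
    _ = A := by rw [← rpow_mul hA, mul_one_div_cancel hγ.ne', rpow_one]

lemma rpow_integral_rpow_le_integral_mul_sq {γ : ℝ} (hγ : γ ∈ Ioo (0:ℝ) 1) {q : ℝ → ℝ}
    (hq : q ∈ Agamma γ) {z : ℝ → ℝ} (hz : ContinuousOn z (Icc 0 1)) {ζ : ℝ} (hζ : 0 < ζ)
    (hzζ : ∀ x ∈ Icc (0:ℝ) 1, ζ ≤ z x) :
    (∫ t in (0:ℝ)..1, z t ^ (2 * γ / (γ - 1))) ^ ((γ - 1) / γ) ≤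
      ∫ t in (0:ℝ)..1, q t * z t ^ 2 := by
  obtain ⟨hqi, hq0, hqγ⟩ := hq
  have hzpos : ∀ x ∈ Icc (0:ℝ) 1, 0 < z x := fun x hx => hζ.trans_le (hzζ x hx)
  have hze : ContinuousOn (fun t => z t ^ (2 * γ / (γ - 1))) (Icc 0 1) :=
    hz.rpow_const fun x hx => Or.inl (hzpos x hx).ne'
  have hze_int := hze.intervalIntegrable_of_Icc (μ := volume) zero_le_one
  have hqz_int : IntervalIntegrable (fun t => q t * z t ^ 2) volume 0 1 :=
    hqi.mul_continuousOn (by rw [uIcc_of_le zero_le_one]; exact hz.pow 2)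
  have hholder : 1 ≤ (∫ t in (0:ℝ)..1, q t * z t ^ 2) ^ γ *
      (∫ t in (0:ℝ)..1, z t ^ (2 * γ / (γ - 1))) ^ (1 - γ) := by
    have hzpos' : ∀ᵐ x ∂(volume.restrict (Ioc (0:ℝ) 1)), 0 < z x := by
      filter_upwards [self_mem_ae_restrict measurableSet_Ioc] with x hx
      exact hzpos x (Ioc_subset_Icc_self hx)
    have := integral_rpow_le_mul_rpow hγ
      (ae_restrict_of_ae_restrict_of_subset Ioc_subset_Icc_self hq0) hzpos' hqz_int.1 hze_int.1
    simpa only [← intervalIntegral.integral_of_le zero_le_one, hqγ] using this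
  refine rpow_le_of_one_le_rpow_mul_rpow hγ.1 ?_ ?_ hholder
  · refine intervalIntegral.integral_nonneg_of_ae_restrict zero_le_one ?_
    filter_upwards [hq0] with t ht
    positivity
  · exact intervalIntegral_pos_of_continuousOn hze fun x hx => rpow_pos_of_pos (hzpos x hx) _

def optimalPotential (γ : ℝ) (y : ℝ → ℝ) (t : ℝ) : ℝ :=
  (∫ s in (0:ℝ)..1, y s ^ (2 * γ / (γ - 1))) ^ (-(1 / γ)) * y t ^ (2 / (γ - 1))

lemma optimalPotential_mem_Agamma {γ : ℝ} (hγ : γ ≠ 0) {y : ℝ → ℝ}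
    (hy : ContinuousOn y (Icc 0 1)) (hypos : ∀ x ∈ Icc (0:ℝ) 1, 0 < y x) :
    optimalPotential γ y ∈ Agamma γ := by
  set I := ∫ s in (0:ℝ)..1, y s ^ (2 * γ / (γ - 1))
  have hI : 0 < I := intervalIntegral_pos_of_continuousOn
    (hy.rpow_const fun x hx => Or.inl (hypos x hx).ne') fun x hx => rpow_pos_of_pos (hypos x hx) _
  have hq : ContinuousOn (optimalPotential γ y) (Icc 0 1) :=
    continuousOn_const.mul (hy.rpow_const fun x hx => Or.inl (hypos x hx).ne')
  have hqγ : EqOn (fun t => optimalPotential γ y t ^ γ)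
      (fun t => I⁻¹ * y t ^ (2 * γ / (γ - 1))) (uIcc 0 1) := by
    intro t ht
    have hyt := hypos t (by rwa [uIcc_of_le zero_le_one] at ht)
    dsimp only [optimalPotential]
    rw [mul_rpow (by positivity) (by positivity), ← rpow_mul hI.le,
      ← rpow_mul hyt.le, neg_mul, one_div_mul_cancel hγ, rpow_neg_one]
    ring_nf
  refine ⟨hq.intervalIntegrable_of_Icc zero_le_one, ?_, ?_⟩
  · refine (ae_restrict_iff' measurableSet_Icc).2 (ae_of_all _ fun x hx => ?_)
    exact mul_nonneg (rpow_nonneg hI.le _) (rpow_nonneg (hypos x hx).le _)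
  · rw [intervalIntegral.integral_congr hqγ, intervalIntegral.integral_const_mul,
      inv_mul_cancel₀ hI.ne']

lemma integral_optimalPotential_mul_sq {γ : ℝ} (hγ0 : γ ≠ 0) (hγ1 : γ ≠ 1) {y : ℝ → ℝ}
    (hy : ContinuousOn y (Icc 0 1)) (hypos : ∀ x ∈ Icc (0:ℝ) 1, 0 < y x) :
    ∫ t in (0:ℝ)..1, optimalPotential γ y t * y t ^ 2 =
      (∫ t in (0:ℝ)..1, y t ^ (2 * γ / (γ - 1))) ^ ((γ - 1) / γ) := by
  set I := ∫ s in (0:ℝ)..1, y s ^ (2 * γ / (γ - 1))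
  have hI : 0 < I := intervalIntegral_pos_of_continuousOn
    (hy.rpow_const fun x hx => Or.inl (hypos x hx).ne') fun x hx => rpow_pos_of_pos (hypos x hx) _
  have hγ1' : γ - 1 ≠ 0 := sub_ne_zero.2 hγ1
  have hqy : EqOn (fun t => optimalPotential γ y t * y t ^ 2)
      (fun t => I ^ (-(1 / γ)) * y t ^ (2 * γ / (γ - 1))) (uIcc 0 1) := by
    intro t ht
    have hyt := hypos t (by rwa [uIcc_of_le zero_le_one] at ht)
    dsimp only [optimalPotential]
    rw [mul_assoc, ← rpow_natCast, ← rpow_add hyt]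
    congr 2
    field_simp
    ring
  rw [intervalIntegral.integral_congr hqy, intervalIntegral.integral_const_mul,
    ← rpow_add_one hI.ne']
  congr 1
  field_simp
  ring

lemma mGamma_le_Gg {γ : ℝ} (hγ : γ ∈ Ioo (0:ℝ) 1) {p : (ℝ → ℝ) × (ℝ → ℝ)} (hp : p ∈ Mset) :
    mGamma γ ≤ Gg γ p := by
  obtain ⟨hpW, ζ, hζ, hζp⟩ := hp
  have hy := continuousOn_of_mem_W12 hpW
  have hypos : ∀ x ∈ Icc (0:ℝ) 1, 0 < p.1 x := fun x hx => hζ.trans_le (hζp x hx)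
  have hq := optimalPotential_mem_Agamma hγ.1.ne' hy hypos
  have hD : 0 < ∫ t in (0:ℝ)..1, p.1 t ^ 2 :=
    intervalIntegral_pos_of_continuousOn (hy.pow 2) fun x hx => pow_pos (hypos x hx) 2
  calc mGamma γ ≤ lambda1 (optimalPotential γ p.1) := mGamma_le_lambda1 hq
    _ ≤ Rayleigh (optimalPotential γ p.1) p := lambda1_le_rayleigh hq.2.1 hpW hD
    _ = Gg γ p := by
        rw [Rayleigh, Gg, Jg, intervalIntegral.integral_add hpW.2.2
          ((hq.1.mul_continuousOn (by rw [uIcc_of_le zero_le_one]; exact hy.pow 2))),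
          integral_optimalPotential_mul_sq hγ.1.ne' hγ.2.ne hy hypos]

def steklov (f : ℝ → ℝ) (h x : ℝ) : ℝ := (∫ t in x..x + h, f t) / h

lemma hasDerivAt_steklov {f : ℝ → ℝ} (hf : Continuous f) (h x : ℝ) :
    HasDerivAt (steklov f h) ((f (x + h) - f x) / h) x := by
  have hprim : ∀ u, HasDerivAt (fun u => ∫ t in (0:ℝ)..u, f t) (f u) u :=
    fun u => (hf.integral_hasStrictDerivAt 0 u).hasDerivAt
  have hsteklov :
      steklov f h = fun u => ((∫ t in (0:ℝ)..u + h, f t) - ∫ t in (0:ℝ)..u, f t) / h := by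
    ext u
    rw [steklov, intervalIntegral.integral_interval_sub_left (hf.intervalIntegrable _ _)
      (hf.intervalIntegrable _ _)]
  rw [hsteklov]
  exact (((hprim (x + h)).comp_add_const x h).sub (hprim x)).div_const h

lemma abs_steklov_sub_le {f : ℝ → ℝ} (hf : Continuous f) {h : ℝ} (hh : 0 < h) {x c ε : ℝ}
    (hε : ∀ u ∈ Icc x (x + h), |f u - c| ≤ ε) : |steklov f h x - c| ≤ ε := by
  have hxh : x ≤ x + h := by linarith
  have hsub : steklov f h x - c = (∫ u in x..x + h, (f u - c)) / h := by
    rw [steklov, intervalIntegral.integral_sub (hf.intervalIntegrable _ _) intervalIntegrable_const,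
      intervalIntegral.integral_const, smul_eq_mul, add_sub_cancel_left]
    field_simp
  rw [hsub, abs_div, abs_of_pos hh, div_le_iff₀ hh]
  calc |∫ u in x..x + h, (f u - c)| ≤ ∫ u in x..x + h, |f u - c| :=
        intervalIntegral.abs_integral_le_integral_abs hxh
    _ ≤ ∫ _ in x..x + h, ε :=
        intervalIntegral.integral_mono_on hxh ((hf.sub continuous_const).abs.intervalIntegrable _ _)
          intervalIntegrable_const hε
    _ = ε * h := by simp [mul_comm]

lemma sq_intervalIntegral_le {v : ℝ → ℝ} {a b : ℝ} (hab : a ≤ b)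
    (hv : IntervalIntegrable v volume a b)
    (hv2 : IntervalIntegrable (fun t => v t ^ 2) volume a b) :
    (∫ t in a..b, v t) ^ 2 ≤ (b - a) * ∫ t in a..b, v t ^ 2 := by
  rcases hab.eq_or_lt with rfl | hab
  · simp
  have hjensen : (⨍ t in a..b, v t) ^ 2 ≤ ⨍ t in a..b, v t ^ 2 := by
    refine even_two.convexOn_pow.map_set_average_le (continuous_pow 2).continuousOn isClosed_univ
      (by simp [uIoc_of_le hab.le, hab]) (by simp [uIoc_of_le hab.le])
      (ae_of_all _ fun _ => mem_univ _) hv.def' hv2.def'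
  have hba : 0 < b - a := sub_pos.2 hab
  rw [interval_average_eq, interval_average_eq, smul_eq_mul, smul_eq_mul, mul_pow,
    inv_pow, sq (b - a), mul_inv, mul_assoc] at hjensen
  have := mul_le_mul_of_nonneg_left hjensen (by positivity : 0 ≤ (b - a) ^ 2)
  field_simp at this
  linarith

lemma integral_diffQuot_le_of_monotone {H : ℝ → ℝ} (hH : Monotone H) (hHc : Continuous H)
    {h : ℝ} (hh : 0 < h) (a b : ℝ) :
    ∫ t in a..b, (H (t + h) - H t) / h ≤ H (b + h) - H a := by
  have hshift : ∫ t in a..b, (H (t + h) - H t) = (∫ t in b..b + h, H t) - ∫ t in a..a + h, H t := by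
    have hHh : Continuous fun t => H (t + h) := by fun_prop
    rw [intervalIntegral.integral_sub (hHh.intervalIntegrable _ _)
      (hHc.intervalIntegrable _ _), intervalIntegral.integral_comp_add_right,
      intervalIntegral.integral_interval_sub_interval_comm' (hHc.intervalIntegrable _ _)
        (hHc.intervalIntegrable _ _) (hHc.intervalIntegrable _ _)]
  have hright : ∫ t in b..b + h, H t ≤ h * H (b + h) := by
    have := intervalIntegral.integral_mono_on (μ := volume) (a := b) (b := b + h) (by linarith)
      (hHc.intervalIntegrable _ _) intervalIntegrable_const fun t ht => hH ht.2
    rwa [intervalIntegral.integral_const, smul_eq_mul, add_sub_cancel_left] at this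
  have hleft : h * H a ≤ ∫ t in a..a + h, H t := by
    have := intervalIntegral.integral_mono_on (μ := volume) (a := a) (b := a + h) (by linarith)
      intervalIntegrable_const (hHc.intervalIntegrable _ _) fun t ht => hH ht.1
    rwa [intervalIntegral.integral_const, smul_eq_mul, add_sub_cancel_left] at this
  rw [intervalIntegral.integral_div, hshift, div_le_iff₀ hh]
  linarith

lemma continuous_of_sub_eq_integral {F v : ℝ → ℝ} (hv : Integrable v)
    (hF : ∀ s t, F t - F s = ∫ u in s..t, v u) : Continuous F := by
  have : F = fun t => F 0 + ∫ u in (0:ℝ)..t, v u := funext fun t => by rw [← hF 0 t]; ring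
  rw [this]
  exact continuous_const.add
    (intervalIntegral.continuous_primitive (fun _ _ => hv.intervalIntegrable) 0)

lemma integral_sq_diffQuot_le {F v : ℝ → ℝ} (hv : Integrable v)
    (hv2 : Integrable fun t => v t ^ 2) (hF : ∀ s t, F t - F s = ∫ u in s..t, v u)
    {h : ℝ} (hh : 0 < h) {a b : ℝ} (hab : a ≤ b) :
    ∫ t in a..b, ((F (t + h) - F t) / h) ^ 2 ≤ ∫ t, v t ^ 2 := by
  have hFc := continuous_of_sub_eq_integral hv hF
  set H := fun x => ∫ u in a..x, v u ^ 2
  have hHsub : ∀ x y, H y - H x = ∫ u in x..y, v u ^ 2 := fun x y =>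
    intervalIntegral.integral_interval_sub_left hv2.intervalIntegrable hv2.intervalIntegrable
  have hHc : Continuous H :=
    intervalIntegral.continuous_primitive (fun _ _ => hv2.intervalIntegrable) a
  have hHmono : Monotone H := fun x y hxy => sub_nonneg.1 <| by
    rw [hHsub]
    exact intervalIntegral.integral_nonneg hxy fun _ _ => sq_nonneg _
  have hpoint : ∀ t, ((F (t + h) - F t) / h) ^ 2 ≤ (H (t + h) - H t) / h := by
    intro t
    have hcs := sq_intervalIntegral_le (by linarith : t ≤ t + h) hv.intervalIntegrable
      hv2.intervalIntegrable
    rw [add_sub_cancel_left] at hcs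
    rw [hF, hHsub, div_pow, div_le_div_iff₀ (by positivity) hh]
    nlinarith
  calc ∫ t in a..b, ((F (t + h) - F t) / h) ^ 2 ≤ ∫ t in a..b, (H (t + h) - H t) / h :=
        intervalIntegral.integral_mono_on hab
          ((by fun_prop : Continuous fun t => ((F (t + h) - F t) / h) ^ 2).intervalIntegrable _ _)
          ((by fun_prop : Continuous fun t => (H (t + h) - H t) / h).intervalIntegrable _ _)
          fun t _ => hpoint t
    _ ≤ H (b + h) - H a := integral_diffQuot_le_of_monotone hHmono hHc hh a b
    _ = ∫ u in a..b + h, v u ^ 2 := hHsub a (b + h)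
    _ ≤ ∫ t, v t ^ 2 := by
        rw [intervalIntegral.integral_of_le (by linarith)]
        exact setIntegral_le_integral hv2 (ae_of_all _ fun _ => sq_nonneg _)

-- Steklov averages over `[t, t + h]` reach past `1`: extend `y'` by zero, so `y` by a constant.
lemma exists_extension_of_mem_W12 {p : (ℝ → ℝ) × (ℝ → ℝ)} (hp : p ∈ W12) :
    ∃ F v : ℝ → ℝ, Integrable v ∧ Integrable (fun t => v t ^ 2) ∧
      (∀ s t, F t - F s = ∫ u in s..t, v u) ∧ EqOn F p.1 (Icc 0 1) ∧
      ∫ t, v t ^ 2 = ∫ t in (0:ℝ)..1, p.2 t ^ 2 := by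
  set v := (Ioc (0:ℝ) 1).indicator p.2
  have hv2 : (fun t => v t ^ 2) = (Ioc (0:ℝ) 1).indicator fun t => p.2 t ^ 2 := by
    ext t
    by_cases ht : t ∈ Ioc (0:ℝ) 1 <;> simp [v, ht]
  have hvi : Integrable v := (integrable_indicator_iff measurableSet_Ioc).2 hp.2.1.1
  refine ⟨fun x => p.1 0 + ∫ u in (0:ℝ)..x, v u, v, hvi, ?_, fun s t => ?_, fun x hx => ?_, ?_⟩
  · rw [hv2]
    exact (integrable_indicator_iff measurableSet_Ioc).2 hp.2.2.1
  · rw [add_sub_add_left_eq_sub,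
      intervalIntegral.integral_interval_sub_left hvi.intervalIntegrable hvi.intervalIntegrable]
  · simp only
    rw [hp.1 x hx, intervalIntegral.integral_of_le hx.1, intervalIntegral.integral_of_le hx.1]
    congr 1
    exact setIntegral_congr_fun measurableSet_Ioc fun t ht =>
      indicator_of_mem (Ioc_subset_Ioc le_rfl hx.2 ht) p.2
  · rw [hv2, integral_indicator measurableSet_Ioc, intervalIntegral.integral_of_le zero_le_one]

lemma exists_steklov_near {F : ℝ → ℝ} (hF : Continuous F) {ε : ℝ} (hε : 0 < ε) :
    ∃ h > 0, ∀ t ∈ Icc (0:ℝ) 1, |steklov F h t - F t| ≤ ε := by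
  obtain ⟨h₁, hh₁, hF₁⟩ := Metric.uniformContinuousOn_iff.1
    ((isCompact_Icc (a := (0:ℝ)) (b := 2)).uniformContinuousOn_of_continuous hF.continuousOn) ε hε
  refine ⟨min (h₁ / 2) 1, by positivity, fun t ht => abs_steklov_sub_le hF (by positivity) ?_⟩
  intro u hu
  have hle : min (h₁ / 2) 1 ≤ 1 := min_le_right _ _
  have hlt : min (h₁ / 2) 1 < h₁ := (min_le_left _ _).trans_lt (by linarith)
  refine (hF₁ u ⟨by linarith [ht.1, hu.1], by linarith [ht.2, hu.2]⟩ t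
    ⟨ht.1, by linarith [ht.2]⟩ ?_).le
  rw [Real.dist_eq, abs_of_nonneg (by linarith [hu.1])]
  linarith [hu.2]

lemma sq_mul_div_sqrt_sq_add_le (a b : ℝ) {c : ℝ} (hc : 0 ≤ c) :
    (a * b / √(a ^ 2 + c)) ^ 2 ≤ b ^ 2 := by
  rw [div_pow, mul_pow, sq_sqrt (by positivity)]
  rcases (add_nonneg (sq_nonneg a) hc).eq_or_lt with h | h
  · simp [← h, sq_nonneg]
  · rw [div_le_iff₀ h]
    nlinarith [sq_nonneg b]

lemma sqrt_sq_add_mem_Mset {Y Y' : ℝ → ℝ} (hY : ∀ x, HasDerivAt Y (Y' x) x)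
    (hY' : Continuous Y') {c : ℝ} (hc : 0 < c) :
    ((fun x => √(Y x ^ 2 + c)), (fun x => Y x * Y' x / √(Y x ^ 2 + c))) ∈ Mset := by
  have hpos : ∀ x, 0 < Y x ^ 2 + c := fun x => by positivity
  have hYc : Continuous Y := continuous_iff_continuousAt.2 fun x => (hY x).continuousAt
  refine ⟨mem_W12_of_hasDerivAt (fun x => ?_) ?_, √c, sqrt_pos.2 hc, fun x _ => ?_⟩
  · have hsq : HasDerivAt (fun x => Y x ^ 2 + c) (2 * Y x * Y' x) x := by
      simpa [mul_comm, mul_assoc, mul_left_comm] using ((hY x).pow 2).add_const c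
    convert hsq.sqrt (hpos x).ne' using 1
    field_simp
  · exact (hYc.mul hY').div (by fun_prop) fun x => (sqrt_pos.2 (hpos x)).ne'
  · exact sqrt_le_sqrt (by nlinarith [sq_nonneg (Y x)])

lemma abs_sq_sub_sq_le {a b ε C : ℝ} (hab : |a - b| ≤ ε) (hb : |b| ≤ C) :
    |a ^ 2 - b ^ 2| ≤ ε * (ε + 2 * C) := by
  have hε : 0 ≤ ε := (abs_nonneg _).trans hab
  calc |a ^ 2 - b ^ 2| = |a - b| * |(a - b) + 2 * b| := by rw [← abs_mul]; ring_nf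
    _ ≤ ε * (ε + 2 * C) := by
        gcongr
        refine (abs_add_le _ _).trans (add_le_add hab ?_)
        rw [abs_mul, abs_two]
        linarith

lemma exists_mem_Mset_sq_near {p : (ℝ → ℝ) × (ℝ → ℝ)} (hp : p ∈ W12) {η : ℝ} (hη : 0 < η) :
    ∃ z ∈ Mset, ∫ t in (0:ℝ)..1, z.2 t ^ 2 ≤ ∫ t in (0:ℝ)..1, p.2 t ^ 2 ∧
      ∀ t ∈ Icc (0:ℝ) 1, p.1 t ^ 2 ≤ z.1 t ^ 2 ∧ z.1 t ^ 2 ≤ p.1 t ^ 2 + η := by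
  obtain ⟨F, v, hv, hv2, hF, hFp, hE⟩ := exists_extension_of_mem_W12 hp
  have hFc := continuous_of_sub_eq_integral hv hF
  obtain ⟨C, hC⟩ := isCompact_Icc.exists_bound_of_continuousOn (hFc.continuousOn (s := Icc 0 1))
  have hC0 : 0 ≤ C := (norm_nonneg _).trans (hC 0 (left_mem_Icc.2 zero_le_one))
  set ε := min 1 (η / 2 / (1 + 2 * C))
  obtain ⟨h, hh, hYF⟩ := exists_steklov_near hFc (ε := ε) (by positivity)
  have hY'c : Continuous fun x => (F (x + h) - F x) / h := by fun_prop
  have hz := sqrt_sq_add_mem_Mset (hasDerivAt_steklov hFc h) hY'c (half_pos hη)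
  refine ⟨_, hz, ?_, fun t ht => ?_⟩
  · calc ∫ t in (0:ℝ)..1,
            (steklov F h t * ((F (t + h) - F t) / h) / √(steklov F h t ^ 2 + η / 2)) ^ 2
        ≤ ∫ t in (0:ℝ)..1, ((F (t + h) - F t) / h) ^ 2 :=
          intervalIntegral.integral_mono_on zero_le_one hz.1.2.2
            ((hY'c.pow 2).intervalIntegrable _ _)
            fun t _ => sq_mul_div_sqrt_sq_add_le _ _ (half_pos hη).le
      _ ≤ ∫ t, v t ^ 2 := integral_sq_diffQuot_le hv hv2 hF hh zero_le_one
      _ = ∫ t in (0:ℝ)..1, p.2 t ^ 2 := hE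
  · have hsq : |steklov F h t ^ 2 - F t ^ 2| ≤ η / 2 :=
      calc |steklov F h t ^ 2 - F t ^ 2| ≤ ε * (ε + 2 * C) :=
            abs_sq_sub_sq_le (hYF t ht) (by simpa using hC t ht)
        _ ≤ η / 2 / (1 + 2 * C) * (1 + 2 * C) := by
            gcongr
            exacts [min_le_right _ _, min_le_left _ _]
        _ = η / 2 := div_mul_cancel₀ _ (by positivity)
    simp only [← hFp ht]
    rw [sq_sqrt (by positivity)]
    constructor <;> linarith [abs_le.1 hsq]

lemma Gg_le_rayleigh_add {γ : ℝ} (hγ : γ ∈ Ioo (0:ℝ) 1) {q : ℝ → ℝ} (hq : q ∈ Agamma γ)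
    {p z : (ℝ → ℝ) × (ℝ → ℝ)} (hp : p ∈ W12) (hD : 0 < ∫ t in (0:ℝ)..1, p.1 t ^ 2) (hz : z ∈ Mset)
    (hzE : ∫ t in (0:ℝ)..1, z.2 t ^ 2 ≤ ∫ t in (0:ℝ)..1, p.2 t ^ 2) {η : ℝ}
    (hzp : ∀ t ∈ Icc (0:ℝ) 1, p.1 t ^ 2 ≤ z.1 t ^ 2 ∧ z.1 t ^ 2 ≤ p.1 t ^ 2 + η) :
    Gg γ z ≤ Rayleigh q p + η * (∫ t in (0:ℝ)..1, q t) / ∫ t in (0:ℝ)..1, p.1 t ^ 2 := by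
  obtain ⟨hzW, ζ, hζ, hzζ⟩ := hz
  have hyc := continuousOn_of_mem_W12 hp
  have hzc := continuousOn_of_mem_W12 hzW
  have hqint : ∀ {f : ℝ → ℝ}, ContinuousOn f (Icc 0 1) →
      IntervalIntegrable (fun t => q t * f t ^ 2) volume 0 1 :=
    fun hf => hq.1.mul_continuousOn (by rw [uIcc_of_le zero_le_one]; exact hf.pow 2)
  have hη : 0 ≤ η := by linarith [hzp 0 (left_mem_Icc.2 zero_le_one)]
  have hnum : 0 ≤ ∫ t in (0:ℝ)..1, (p.2 t ^ 2 + q t * p.1 t ^ 2) + η * q t := by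
    refine intervalIntegral.integral_nonneg_of_ae_restrict zero_le_one ?_
    filter_upwards [hq.2.1] with t hqt
    exact add_nonneg (add_nonneg (sq_nonneg _) (mul_nonneg hqt (sq_nonneg _))) (mul_nonneg hη hqt)
  have hqz : ∫ t in (0:ℝ)..1, q t * z.1 t ^ 2 ≤ ∫ t in (0:ℝ)..1, (q t * p.1 t ^ 2 + η * q t) := by
    refine intervalIntegral.integral_mono_ae_restrict zero_le_one (hqint hzc)
      ((hqint hyc).add (hq.1.const_mul _)) ?_
    filter_upwards [hq.2.1, self_mem_ae_restrict measurableSet_Icc] with t hqt ht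
    nlinarith [(hzp t ht).2]
  have hzD : ∫ t in (0:ℝ)..1, p.1 t ^ 2 ≤ ∫ t in (0:ℝ)..1, z.1 t ^ 2 :=
    intervalIntegral.integral_mono_on zero_le_one
      ((hyc.pow 2).intervalIntegrable_of_Icc zero_le_one)
      ((hzc.pow 2).intervalIntegrable_of_Icc zero_le_one) fun t ht => (hzp t ht).1
  have hholder := rpow_integral_rpow_le_integral_mul_sq hγ hq hzc hζ hzζ
  rw [Rayleigh, ← add_div, ← intervalIntegral.integral_const_mul,
    ← intervalIntegral.integral_add (hp.2.2.add (hqint hyc)) (hq.1.const_mul _)]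
  refine div_le_div₀ hnum ?_ hD hzD
  have hsplit : ∫ t in (0:ℝ)..1, (p.2 t ^ 2 + q t * p.1 t ^ 2) + η * q t =
      (∫ t in (0:ℝ)..1, p.2 t ^ 2) + ∫ t in (0:ℝ)..1, (q t * p.1 t ^ 2 + η * q t) := by
    simp_rw [add_assoc]
    exact intervalIntegral.integral_add hp.2.2 ((hqint hyc).add (hq.1.const_mul _))
  rw [Jg, hsplit]
  linarith

lemma sInf_Gg_le_rayleigh {γ : ℝ} (hγ : γ ∈ Ioo (0:ℝ) 1) {q : ℝ → ℝ} (hq : q ∈ Agamma γ)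
    {p : (ℝ → ℝ) × (ℝ → ℝ)} (hp : p ∈ W12) (hD : 0 < ∫ t in (0:ℝ)..1, p.1 t ^ 2) :
    sInf (Gg γ '' Mset) ≤ Rayleigh q p := by
  set D := ∫ t in (0:ℝ)..1, p.1 t ^ 2
  set Q := ∫ t in (0:ℝ)..1, q t
  have hQ : 0 ≤ Q := intervalIntegral.integral_nonneg_of_ae_restrict zero_le_one hq.2.1
  refine le_of_forall_pos_le_add fun ε hε => ?_
  obtain ⟨z, hz, hzE, hzp⟩ := exists_mem_Mset_sq_near hp (η := ε * D / (Q + 1)) (by positivity)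
  calc sInf (Gg γ '' Mset) ≤ Gg γ z :=
        csInf_le ⟨0, by rintro _ ⟨z', hz', rfl⟩; exact Gg_nonneg γ hz'⟩ ⟨z, hz, rfl⟩
    _ ≤ Rayleigh q p + ε * D / (Q + 1) * Q / D := Gg_le_rayleigh_add hγ hq hp hD hz hzE hzp
    _ ≤ Rayleigh q p + ε := by
        gcongr
        rw [div_le_iff₀ hD, div_mul_eq_mul_div, div_le_iff₀ (by positivity)]
        nlinarith

lemma const_one_mem_Agamma (γ : ℝ) : (fun _ => (1:ℝ)) ∈ Agamma γ :=
  ⟨intervalIntegrable_const, ae_of_all _ fun _ => zero_le_one, by simp⟩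

lemma sInf_Gg_le_mGamma {γ : ℝ} (hγ : γ ∈ Ioo (0:ℝ) 1) : sInf (Gg γ '' Mset) ≤ mGamma γ := by
  refine le_csInf ⟨_, mem_image_of_mem _ (const_one_mem_Agamma γ)⟩ ?_
  rintro _ ⟨q, hq, rfl⟩
  refine le_csInf (rayleigh_set_nonempty q) ?_
  rintro _ ⟨p, hp, hD, rfl⟩
  exact sInf_Gg_le_rayleigh hγ hq hp hD

/-- For every `γ ∈ (0,1)` one has `m_γ = inf_{y ∈ M} G_γ(y)`. -/
theorem mGamma_eq_inf_Gg (γ : ℝ) (hγ : γ ∈ Ioo (0:ℝ) 1) :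
    mGamma γ = sInf (Gg γ '' Mset) :=
  le_antisymm
    (le_csInf ⟨_, mem_image_of_mem _ const_one_mem_Mset⟩
      (by rintro _ ⟨p, hp, rfl⟩; exact mGamma_le_Gg hγ hp))
    (sInf_Gg_le_mGamma hγ)
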